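/- arXiv:1505.02659 — 5 statements merged into one kernel-verified Lean document; each statement's English description precedes it below -/
import Mathlib

section
/- Let H be a complex Hilbert space, A a bounded operator on H, and B a densely defined operator on H. If A*(H) ⊆ D(B*), then the operator AB : D(B) → H is bounded. -/
/-!
The operator `B* A*` is defined on all of `H` and closed, because `B*` is closed and `A*` is
bounded; by the closed graph theorem it is bounded. Its Hilbert adjoint `(B* A*)*` is then a
bounded operator that agrees with `A B` on `D(B)`.
-/

namespace LinearPMap

section ClosedGraph

variable {𝕜 E F G : Type*} [NontriviallyNormedField 𝕜]
  [NormedAddCommGroup E] [NormedSpace 𝕜 E]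
  [NormedAddCommGroup F] [NormedSpace 𝕜 F]
  [NormedAddCommGroup G] [NormedSpace 𝕜 G]

def compOfMemDomain (S : E →ₗ.[𝕜] F) (C : G →L[𝕜] E) (hC : ∀ x, C x ∈ S.domain) :
    G →ₗ[𝕜] F :=
  S.toFun ∘ₗ (C : G →ₗ[𝕜] E).codRestrict S.domain hC

theorem IsClosed.continuous_compOfMemDomain [CompleteSpace F] [CompleteSpace G]
    {S : E →ₗ.[𝕜] F} (hS : S.IsClosed)
    (C : G →L[𝕜] E) (hC : ∀ x, C x ∈ S.domain) : Continuous (S.compOfMemDomain C hC) := by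
  refine (S.compOfMemDomain C hC).continuous_of_seq_closed_graph fun u x y hu hSu => ?_
  have hgraph : (C x, y) ∈ S.graph :=
    hS.mem_of_tendsto ((C.continuous.tendsto x).comp hu |>.prodMk_nhds hSu)
      (Filter.Eventually.of_forall fun n => S.mem_graph ⟨C (u n), hC (u n)⟩)
  obtain ⟨z, hz, hSz⟩ : ∃ z : S.domain, (z : E) = C x ∧ S z = y :=
    S.mem_graph_iff.mp hgraph
  rw [← hSz]
  exact congrArg S (Subtype.ext hz)

end ClosedGraph

section Adjoint

variable {𝕜 E F G : Type*} [RCLike 𝕜]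
  [NormedAddCommGroup E] [InnerProductSpace 𝕜 E] [CompleteSpace E]
  [NormedAddCommGroup F] [InnerProductSpace 𝕜 F] [CompleteSpace F]
  [NormedAddCommGroup G] [InnerProductSpace 𝕜 G] [CompleteSpace G]

theorem exists_clm_apply_eq_comp_of_adjoint_mem_domain {B : E →ₗ.[𝕜] F}
    (hB : Dense (B.domain : Set E)) (A : F →L[𝕜] G)
    (hran : ∀ v, ContinuousLinearMap.adjoint A v ∈ B.adjoint.domain) :
    ∃ T : E →L[𝕜] G, ∀ w : B.domain, T w = A (B w) := by
  let S : G →L[𝕜] E := ⟨B.adjoint.compOfMemDomain _ hran,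
    (adjoint_isClosed hB).continuous_compOfMemDomain _ hran⟩
  refine ⟨ContinuousLinearMap.adjoint S, fun w => ext_inner_left 𝕜 fun v => ?_⟩
  rw [ContinuousLinearMap.adjoint_inner_right, ← ContinuousLinearMap.adjoint_inner_left]
  exact adjoint_isFormalAdjoint hB ⟨_, hran v⟩ w

end Adjoint

end LinearPMap

/-- If `A` is bounded, `B` densely defined and `A*(H) ⊆ D(B*)`, then the operator
`A ∘ B : D(B) → H` is bounded. -/
theorem stmt1
    {H : Type*} [NormedAddCommGroup H] [InnerProductSpace ℂ H] [CompleteSpace H]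
    (A : H →L[ℂ] H) (B : H →ₗ.[ℂ] H) (hB : Dense (B.domain : Set H))
    (hran : ∀ v : H, (ContinuousLinearMap.adjoint A) v ∈ B.adjoint.domain) :
    ∃ C : ℝ, ∀ w : B.domain, ‖A (B w)‖ ≤ C * ‖(w : H)‖ := by
  obtain ⟨T, hT⟩ := LinearPMap.exists_clm_apply_eq_comp_of_adjoint_mem_domain hB A hran
  exact ⟨‖T‖, fun w => hT w ▸ T.le_opNorm w⟩
end

section
/- Let H be a complex Hilbert space, A a bounded operator, and B a densely defined operator whose adjoint B* is also densely defined (so B is closable with closure B̄ = B**). Then the operator A*B* (defined on D(B*)) is bounded if and only if A(H) ⊆ D(B̄); and in that case the operator B̄A is bounded, indeed B̄A = (A*B*)*. -/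
open scoped InnerProductSpace

private lemma norm_le_of_dense_pairing
    {H : Type*} [NormedAddCommGroup H] [InnerProductSpace ℂ H]
    (D : Set H) (hD : Dense D) (u : H) (K : ℝ) (hK : 0 ≤ K)
    (h : ∀ w ∈ D, ‖(⟪u, w⟫_ℂ)‖ ≤ K * ‖w‖) : ‖u‖ ≤ K := by
  have h' : ∀ w : H, ‖(⟪u, w⟫_ℂ)‖ ≤ K * ‖w‖ := by
    have hcl : IsClosed {w : H | ‖(⟪u, w⟫_ℂ)‖ ≤ K * ‖w‖} :=
      isClosed_le (continuous_norm.comp (continuous_const.inner continuous_id)) (continuous_const.mul continuous_norm)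
    intro w
    exact closure_minimal h hcl (hD.closure_eq ▸ Set.mem_univ w)
  rcases eq_or_lt_of_le (norm_nonneg u) with h0 | h0
  · rw [← h0]; exact hK
  · have := h' u
    have hre : ‖u‖ * ‖u‖ ≤ ‖(⟪u, u⟫_ℂ)‖ := by
      rw [← inner_self_eq_norm_mul_norm (𝕜 := ℂ)]
      exact RCLike.re_le_norm _
    have : ‖u‖ * ‖u‖ ≤ K * ‖u‖ := hre.trans this
    exact le_of_mul_le_mul_right this h0

/-- For `A` bounded and `B` densely defined with densely defined adjoint (so the closure
`B̄ = B**` exists): `A* ∘ B*` (on `D(B*)`) is bounded iff `A(H) ⊆ D(B̄)`; and in that case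
`B̄ ∘ A` is bounded, indeed `B̄ A = (A* B*)*`. -/
theorem stmt2
    {H : Type*} [NormedAddCommGroup H] [InnerProductSpace ℂ H] [CompleteSpace H]
    (A : H →L[ℂ] H) (B : H →ₗ.[ℂ] H)
    (hB : Dense (B.domain : Set H)) (hB' : Dense (B.adjoint.domain : Set H))
    (AstarBstar : H →ₗ.[ℂ] H)
    (hASBS : AstarBstar =
      ⟨B.adjoint.domain, (ContinuousLinearMap.adjoint A).toLinearMap.comp B.adjoint.toFun⟩) :
    ((∃ C : ℝ, ∀ w : B.adjoint.domain,
        ‖(ContinuousLinearMap.adjoint A) (B.adjoint w)‖ ≤ C * ‖(w : H)‖)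
      ↔ ∀ v : H, A v ∈ B.adjoint.adjoint.domain) ∧
    ((∀ v : H, A v ∈ B.adjoint.adjoint.domain) →
      (∃ C : ℝ, ∀ (v : H) (h : A v ∈ B.adjoint.adjoint.domain),
        ‖B.adjoint.adjoint ⟨A v, h⟩‖ ≤ C * ‖v‖) ∧
      ∀ (v : H) (h : A v ∈ B.adjoint.adjoint.domain)
        (hv : v ∈ AstarBstar.adjoint.domain),
        AstarBstar.adjoint ⟨v, hv⟩ = B.adjoint.adjoint ⟨A v, h⟩) := by
  subst hASBS
  have hfa := LinearPMap.adjoint_isFormalAdjoint hB'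
  -- membership implies boundedness of A* ∘ B* (Banach–Steinhaus)
  have bound_of_mem : (∀ v : H, A v ∈ B.adjoint.adjoint.domain) →
      ∃ C : ℝ, 0 ≤ C ∧ ∀ w : B.adjoint.domain,
        ‖(ContinuousLinearMap.adjoint A) (B.adjoint w)‖ ≤ C * ‖(w : H)‖ := by
    intro hmem
    set g : {w : B.adjoint.domain // ‖(w : H)‖ ≤ 1} → H →L[ℂ] ℂ :=
      fun i => innerSL ℂ ((ContinuousLinearMap.adjoint A) (B.adjoint i.1)) with hg
    have hpt : ∀ x : H, ∃ C, ∀ i, ‖g i x‖ ≤ C := by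
      intro x
      refine ⟨‖B.adjoint.adjoint ⟨A x, hmem x⟩‖, fun i => ?_⟩
      have h1 : g i x = ⟪(ContinuousLinearMap.adjoint A) (B.adjoint i.1), x⟫_ℂ := rfl
      rw [h1, ContinuousLinearMap.adjoint_inner_left, norm_inner_symm,
        ← hfa ⟨A x, hmem x⟩ i.1]
      calc ‖⟪B.adjoint.adjoint ⟨A x, hmem x⟩, (i.1 : H)⟫_ℂ‖
          ≤ ‖B.adjoint.adjoint ⟨A x, hmem x⟩‖ * ‖(i.1 : H)‖ := norm_inner_le_norm _ _
        _ ≤ ‖B.adjoint.adjoint ⟨A x, hmem x⟩‖ * 1 :=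
            mul_le_mul_of_nonneg_left i.2 (norm_nonneg _)
        _ = _ := mul_one _
    obtain ⟨C', hC'⟩ := banach_steinhaus hpt
    refine ⟨max C' 0, le_max_right _ _, fun w => ?_⟩
    have hnorm : ∀ i : {w : B.adjoint.domain // ‖(w : H)‖ ≤ 1},
        ‖(ContinuousLinearMap.adjoint A) (B.adjoint i.1)‖ ≤ max C' 0 := fun i => by
      rw [← innerSL_apply_norm (𝕜 := ℂ)]
      exact (hC' i).trans (le_max_left _ _)
    rcases eq_or_lt_of_le (norm_nonneg (w : H)) with h0 | h0
    · have hcoe : (w : H) = 0 := norm_eq_zero.mp h0.symm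
      have hw0 : w = 0 := Subtype.ext (by simp [hcoe])
      rw [hw0]
      simp
    · set r := ‖(w : H)‖ with hr
      set w' : B.adjoint.domain := ((r⁻¹ : ℝ) : ℂ) • w with hw'
      have hw'norm : ‖(w' : H)‖ ≤ 1 := by
        have : (w' : H) = ((r⁻¹ : ℝ) : ℂ) • (w : H) := rfl
        rw [this, norm_smul, Complex.norm_real, Real.norm_eq_abs,
          abs_of_nonneg (inv_nonneg.mpr (norm_nonneg _)), inv_mul_cancel₀ (ne_of_gt h0)]
      have hle := hnorm ⟨w', hw'norm⟩
      have he : (ContinuousLinearMap.adjoint A) (B.adjoint w')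
          = ((r⁻¹ : ℝ) : ℂ) • (ContinuousLinearMap.adjoint A) (B.adjoint w) := by
        rw [hw', LinearPMap.map_smul, map_smul]
      rw [he, norm_smul, Complex.norm_real, Real.norm_eq_abs,
        abs_of_nonneg (inv_nonneg.mpr (norm_nonneg _))] at hle
      rw [mul_comm, ← inv_mul_le_iff₀ h0]
      exact hle
  constructor
  · constructor
    · rintro ⟨C, hC⟩ v
      rw [LinearPMap.mem_adjoint_domain_iff]
      refine AddMonoidHomClass.continuous_of_bound ((innerₛₗ ℂ (A v)).comp B.adjoint.toFun) (‖v‖ * C) fun x => ?_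
      have h1 : ((innerₛₗ ℂ (A v)).comp B.adjoint.toFun) x = ⟪A v, B.adjoint x⟫_ℂ := rfl
      rw [h1, ← ContinuousLinearMap.adjoint_inner_right]
      calc ‖⟪v, (ContinuousLinearMap.adjoint A) (B.adjoint x)⟫_ℂ‖
          ≤ ‖v‖ * ‖(ContinuousLinearMap.adjoint A) (B.adjoint x)‖ := norm_inner_le_norm _ _
        _ ≤ ‖v‖ * (C * ‖(x : H)‖) := mul_le_mul_of_nonneg_left (hC x) (norm_nonneg _)
        _ = ‖v‖ * C * ‖(x : H)‖ := by ring
    · intro hmem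
      obtain ⟨C, _, hC⟩ := bound_of_mem hmem
      exact ⟨C, hC⟩
  · intro hmem
    obtain ⟨C, hC0, hC⟩ := bound_of_mem hmem
    have key : ∀ (v : H) (h : A v ∈ B.adjoint.adjoint.domain),
        ∀ w : B.adjoint.domain,
          ⟪B.adjoint.adjoint ⟨A v, h⟩, (w : H)⟫_ℂ
            = ⟪v, (ContinuousLinearMap.adjoint A) (B.adjoint w)⟫_ℂ := by
      intro v h w
      rw [hfa ⟨A v, h⟩ w, ← ContinuousLinearMap.adjoint_inner_right]
    constructor
    · refine ⟨C, fun v h => ?_⟩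
      refine norm_le_of_dense_pairing (B.adjoint.domain : Set H) hB' _ (C * ‖v‖)
        (mul_nonneg hC0 (norm_nonneg _)) ?_
      rintro w hw
      rw [key v h ⟨w, hw⟩]
      calc ‖⟪v, (ContinuousLinearMap.adjoint A) (B.adjoint ⟨w, hw⟩)⟫_ℂ‖
          ≤ ‖v‖ * ‖(ContinuousLinearMap.adjoint A) (B.adjoint ⟨w, hw⟩)‖ := norm_inner_le_norm _ _
        _ ≤ ‖v‖ * (C * ‖w‖) := mul_le_mul_of_nonneg_left (hC ⟨w, hw⟩) (norm_nonneg _)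
        _ = C * ‖v‖ * ‖w‖ := by ring
    · intro v h hv
      exact LinearPMap.adjoint_apply_eq
        (T := LinearPMap.mk B.adjoint.domain
          ((ContinuousLinearMap.adjoint A).toLinearMap.comp B.adjoint.toFun))
        hB' ⟨v, hv⟩ fun x => key v h x
end

section
/- Let (U_t) be a strongly continuous unitary one-parameter group on ℋ with self-adjoint generator B, and let A ∈ B(ℋ) be such that A(ℋ) ⊆ D(B²) and B²A is bounded (as an everywhere-defined operator). Then the map t ↦ U_t A from ℝ to B(ℋ) is differentiable in the operator norm at t = 0, with derivative iBA, i.e., lim_{t→0} ‖(1/t)(U_t A − A) − iBA‖ = 0. -/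
/-! For `w ∈ D(B²)` the mean value inequality, applied twice to the orbit `s ↦ U s w`, gives
`‖U t w - w - t • i B w‖ ≤ ‖B² w‖ t²`: first `‖U s (B w) - B w‖ ≤ ‖B² w‖ |s|` because `U s` is a
contraction, and this controls the derivative `i U s (B w)` of the orbit against its value at `0`.
For `w = A v` the bound is uniform in `‖v‖`, so `‖U t A - A - t • i BA‖ ≤ ‖B²A‖ t² = o(t)`. -/

open Asymptotics Filter

section Calculus

variable {E : Type*} [NormedAddCommGroup E] [NormedSpace ℝ E]

theorem norm_sub_sub_smul_le_of_hasDerivAt {f f' : ℝ → E} {C : ℝ}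
    (hf : ∀ s, HasDerivAt f (f' s) s) (hf' : ∀ s, ‖f' s - f' 0‖ ≤ C * |s|) (t : ℝ) :
    ‖f t - f 0 - t • f' 0‖ ≤ C * t ^ 2 := by
  have hC : 0 ≤ C := by simpa using (norm_nonneg _).trans (hf' 1)
  have hderiv : ∀ s, HasDerivAt (fun r => f r - r • f' 0) (f' s - f' 0) s := fun s =>
    ((hf s).sub ((hasDerivAt_id s).smul_const (f' 0))).congr_deriv (by rw [one_smul])
  have hbound : ∀ s ∈ Set.uIcc 0 t, ‖f' s - f' 0‖ ≤ C * |t| := fun s hs =>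
    (hf' s).trans <| mul_le_mul_of_nonneg_left (by simpa using Set.abs_sub_left_of_mem_uIcc hs) hC
  have hmvt := (convex_uIcc 0 t).norm_image_sub_le_of_norm_hasDerivWithin_le
    (fun s _ => (hderiv s).hasDerivWithinAt) hbound Set.left_mem_uIcc Set.right_mem_uIcc
  calc ‖f t - f 0 - t • f' 0‖ = ‖(f t - t • f' 0) - (f 0 - (0 : ℝ) • f' 0)‖ := by
        rw [zero_smul, sub_zero, sub_right_comm]
    _ ≤ C * |t| * ‖t - 0‖ := hmvt
    _ = C * t ^ 2 := by rw [sub_zero, Real.norm_eq_abs, mul_assoc, abs_mul_abs_self, sq]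

theorem hasDerivAt_zero_of_norm_sub_sub_smul_le_sq {F : ℝ → E} {F' : E} {C : ℝ}
    (h : ∀ t, ‖F t - F 0 - t • F'‖ ≤ C * t ^ 2) : HasDerivAt F F' 0 := by
  rw [hasDerivAt_iff_isLittleO]
  simp only [sub_zero]
  refine IsBigO.trans_isLittleO (g := fun t : ℝ => t ^ 2) ?_ (isLittleO_pow_id one_lt_two)
  refine IsBigO.of_bound C (Eventually.of_forall fun t => ?_)
  simpa [Real.norm_eq_abs, sq_abs] using h t

end Calculus

section Orbit

variable {E : Type*} [NormedAddCommGroup E] [NormedSpace ℂ E]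
  {U : ℝ → E →L[ℂ] E} {B : E →ₗ.[ℂ] E}
  (hU0 : U 0 = 1) (hU : ∀ (t : ℝ) (v : E), ‖U t v‖ ≤ ‖v‖)
  (hgen : ∀ (v : B.domain) (t : ℝ),
    HasDerivAt (fun s : ℝ => U s (v : E)) (Complex.I • U t (B v)) t)
include hU0 hU hgen

theorem norm_orbit_sub_le (w : B.domain) (t : ℝ) : ‖U t w - w‖ ≤ ‖B w‖ * |t| := by
  have hmvt := (convex_univ (𝕜 := ℝ)).norm_image_sub_le_of_norm_hasDerivWithin_le
    (fun s _ => (hgen w s).hasDerivWithinAt)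
    (fun s _ => by rw [norm_smul, Complex.norm_I, one_mul]; exact hU s _)
    (Set.mem_univ 0) (Set.mem_univ t)
  simpa [hU0, Real.norm_eq_abs] using hmvt

theorem norm_orbit_sub_sub_smul_le (w : B.domain) (hw : B w ∈ B.domain) (t : ℝ) :
    ‖U t w - w - t • Complex.I • B w‖ ≤ ‖B ⟨B w, hw⟩‖ * t ^ 2 := by
  have hbound : ∀ s : ℝ,
      ‖Complex.I • U s (B w) - Complex.I • U 0 (B w)‖ ≤ ‖B ⟨B w, hw⟩‖ * |s| := fun s => by
    rw [← smul_sub, norm_smul, Complex.norm_I, one_mul]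
    simpa [hU0] using norm_orbit_sub_le hU0 hU hgen ⟨B w, hw⟩ s
  simpa [hU0] using norm_sub_sub_smul_le_of_hasDerivAt (hgen w) hbound t

end Orbit

theorem stmt8_general
    {H : Type*} [NormedAddCommGroup H] [InnerProductSpace ℂ H]
    (U : ℝ → H →L[ℂ] H)
    (hU0 : U 0 = 1)
    (hUiso : ∀ (t : ℝ) (v : H), ‖U t v‖ = ‖v‖)
    (B : H →ₗ.[ℂ] H)
    (hgen : ∀ (v : B.domain) (t : ℝ),
      HasDerivAt (fun s : ℝ => U s (v : H)) (Complex.I • U t (B v)) t)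
    (A T1 T2 : H →L[ℂ] H)
    (hA1 : ∀ v : H, A v ∈ B.domain)
    (hA2 : ∀ v : H, B ⟨A v, hA1 v⟩ ∈ B.domain)
    (hT1 : ∀ v : H, T1 v = B ⟨A v, hA1 v⟩)
    (hT2 : ∀ v : H, T2 v = B ⟨B ⟨A v, hA1 v⟩, hA2 v⟩) :
    HasDerivAt (fun t : ℝ => U t ∘L A) (Complex.I • T1) 0 := by
  refine hasDerivAt_zero_of_norm_sub_sub_smul_le_sq (C := ‖T2‖) fun t => ?_
  refine ContinuousLinearMap.opNorm_le_bound _ (by positivity) fun v => ?_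
  have hv := norm_orbit_sub_sub_smul_le hU0 (fun t v => (hUiso t v).le) hgen
    ⟨A v, hA1 v⟩ (hA2 v) t
  rw [← hT2, ← hT1] at hv
  calc ‖(U t ∘L A - U 0 ∘L A - t • Complex.I • T1) v‖
      = ‖U t (A v) - A v - t • Complex.I • T1 v‖ := by simp [hU0]
    _ ≤ ‖T2 v‖ * t ^ 2 := hv
    _ ≤ ‖T2‖ * t ^ 2 * ‖v‖ := by
      rw [mul_right_comm]; gcongr; exact T2.le_opNorm v

/-- For a strongly continuous unitary one-parameter group `U_t = e^{itB}` with self-adjoint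
generator `B`, and `A` bounded with `A(H) ⊆ D(B²)` and `B²A` bounded (as well as `BA = T1`),
the map `t ↦ U_t ∘ A` is norm-differentiable at `t = 0` with derivative `iBA`. -/
theorem stmt8
    {H : Type*} [NormedAddCommGroup H] [InnerProductSpace ℂ H] [CompleteSpace H]
    (U : ℝ → H →L[ℂ] H)
    (hU0 : U 0 = 1) (hUadd : ∀ s t : ℝ, U (s + t) = U s ∘L U t)
    (hUiso : ∀ (t : ℝ) (v : H), ‖U t v‖ = ‖v‖)
    (hUcont : ∀ v : H, Continuous fun t : ℝ => U t v)
    (B : H →ₗ.[ℂ] H) (hdense : Dense (B.domain : Set H)) (hsa : B.adjoint = B)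
    (hgen : ∀ (v : B.domain) (t : ℝ),
      HasDerivAt (fun s : ℝ => U s (v : H)) (Complex.I • U t (B v)) t)
    (A T1 T2 : H →L[ℂ] H)
    (hA1 : ∀ v : H, A v ∈ B.domain)
    (hA2 : ∀ v : H, B ⟨A v, hA1 v⟩ ∈ B.domain)
    (hT1 : ∀ v : H, T1 v = B ⟨A v, hA1 v⟩)
    (hT2 : ∀ v : H, T2 v = B ⟨B ⟨A v, hA1 v⟩, hA2 v⟩) :
    HasDerivAt (fun t : ℝ => U t ∘L A) (Complex.I • T1) 0 :=
  stmt8_general U hU0 hUiso B hgen A T1 T2 hA1 hA2 hT1 hT2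
end

section
/- Let A be a densely defined symmetric operator on a complex Hilbert space ℋ and N ≥ 1 a self-adjoint operator with D(N) ⊆ D(A), such that |⟨Av, v⟩| ≤ ⟨Nv, v⟩ for all v ∈ D(N). Then for all v ∈ D(N), ‖N^{-1/2}Av‖ ≤ ‖N^{1/2}v‖, i.e., A is bounded from ℋ₁ to ℋ₋₁ with norm at most 1. -/
/-!
Write `T = N^{1/2}` on `D(N)`. The form `B(v, w) = ⟪Av, w⟫` is Hermitian with
`|B(v, v)| ≤ ‖Tv‖²`, so polarization and the parallelogram law give
`|B(v, w)| ≤ ‖Tv‖ ‖Tw‖`. Since `N ≥ 1` is self-adjoint, its range is dense. For `w ∈ D(N)`,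
`‖Tw‖² = Re⟪Nw - Av, w⟫ + Re B(v, w) ≤ (‖Nw - Av‖ + ‖Tv‖) ‖Tw‖` and `N^{-1/2} N w = T w`,
so letting `Nw → Av` gives `‖N^{-1/2} A v‖ ≤ ‖Tv‖`.
-/

open scoped InnerProductSpace ComplexConjugate

namespace LinearMap

variable {𝕜 V E : Type*} [RCLike 𝕜] [AddCommGroup V] [Module 𝕜 V]
  [NormedAddCommGroup E] [InnerProductSpace 𝕜 E]
  {B : V →ₗ⋆[𝕜] V →ₗ[𝕜] 𝕜} {T : V →ₗ[𝕜] E}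

theorem IsSymm.four_mul_re_apply_le (hB : B.IsSymm) (h : ∀ x, ‖B x x‖ ≤ ‖T x‖ ^ 2) (x y : V) :
    4 * RCLike.re (B x y) ≤ 2 * ‖T x‖ ^ 2 + 2 * ‖T y‖ ^ 2 := by
  have hpolar : RCLike.re (B (x + y) (x + y)) - RCLike.re (B (x - y) (x - y)) =
      4 * RCLike.re (B x y) := by
    have hyx : B y x = conj (B x y) := (hB.eq x y).symm
    simp only [map_add, map_sub, add_apply, sub_apply, hyx, RCLike.conj_re]
    ring
  have hplus := (RCLike.re_le_norm _).trans (h (x + y))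
  have hminus := ((neg_le_abs _).trans (RCLike.abs_re_le_norm _)).trans (h (x - y))
  have hpar := parallelogram_law_with_norm 𝕜 (T x) (T y)
  rw [T.map_add] at hplus
  rw [T.map_sub] at hminus
  nlinarith

theorem IsSymm.re_apply_le (hB : B.IsSymm) (h : ∀ x, ‖B x x‖ ≤ ‖T x‖ ^ 2) (x y : V) :
    RCLike.re (B x y) ≤ ‖T x‖ * ‖T y‖ := by
  have hquad : ∀ t : ℝ, 0 ≤ 2 * ‖T y‖ ^ 2 * (t * t) + (-4 * RCLike.re (B x y)) * t +
      2 * ‖T x‖ ^ 2 := by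
    intro t
    have hscaled := hB.four_mul_re_apply_le h x ((t : 𝕜) • y)
    rw [(B x).map_smul, T.map_smul, norm_smul, RCLike.norm_ofReal, smul_eq_mul,
      RCLike.re_ofReal_mul, mul_pow, sq_abs] at hscaled
    nlinarith
  have hdisc := discrim_le_zero hquad
  rw [discrim] at hdisc
  exact le_of_sq_le_sq (by nlinarith) (by positivity)

theorem IsSymm.norm_apply_le (hB : B.IsSymm) (h : ∀ x, ‖B x x‖ ≤ ‖T x‖ ^ 2) (x y : V) :
    ‖B x y‖ ≤ ‖T x‖ * ‖T y‖ := by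
  -- rotating `y` by `conj (B x y)` turns `B x y` into the real number `‖B x y‖ ^ 2`
  have hrot := hB.re_apply_le h x (conj (B x y) • y)
  rw [(B x).map_smul, T.map_smul, smul_eq_mul, RCLike.conj_mul, norm_smul,
    RCLike.norm_conj] at hrot
  norm_cast at hrot
  nlinarith [mul_nonneg (norm_nonneg (T x)) (norm_nonneg (T y))]

end LinearMap

theorem Dense.norm_apply_le {E F : Type*} [SeminormedAddCommGroup E] [SeminormedAddCommGroup F]
    {f : E → F} (hf : Continuous f) {s : Set E} (hs : Dense s) {x : E} {c : ℝ}
    (h : ∀ z ∈ s, ‖f z‖ ≤ ‖z - x‖ + c) : ‖f x‖ ≤ c := by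
  simpa using hs.induction (P := fun z => ‖f z‖ ≤ ‖z - x‖ + c) h
    (isClosed_le (by fun_prop) (by fun_prop)) x

namespace LinearPMap

variable {𝕜 H : Type*} [RCLike 𝕜] [NormedAddCommGroup H] [InnerProductSpace 𝕜 H]

theorem dense_range_of_adjoint_eq_self [CompleteSpace H] {N : H →ₗ.[𝕜] H} (hN : N.adjoint = N)
    (hN0 : ∀ v : N.domain, ⟪N v, (v : H)⟫_𝕜 = 0 → (v : H) = 0) :
    Dense (LinearMap.range N.toFun : Set H) := by
  rw [Submodule.dense_iff_topologicalClosure_eq_top, Submodule.topologicalClosure_eq_top_iff,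
    Submodule.eq_bot_iff]
  intro y hy
  have hyN : ∀ v : N.domain, ⟪N v, y⟫_𝕜 = 0 := fun v =>
    (Submodule.mem_orthogonal _ _).mp hy (N v) ⟨v, rfl⟩
  have hy_mem : y ∈ N.domain := hN ▸ mem_adjoint_domain_of_exists y
    ⟨0, fun v => by rw [inner_zero_left, inner_eq_zero_symm.mp (hyN v)]⟩
  exact hN0 ⟨y, hy_mem⟩ (hyN _)

theorem norm_le_norm_sub_add {N : H →ₗ.[𝕜] H} {T : N.domain → H}
    (hT : ∀ w, ‖T w‖ ^ 2 = RCLike.re ⟪N w, (w : H)⟫_𝕜)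
    (hle : ∀ w : N.domain, ‖(w : H)‖ ≤ ‖T w‖) {x : H} {c : ℝ} (hc : 0 ≤ c)
    (hx : ∀ w : N.domain, RCLike.re ⟪x, (w : H)⟫_𝕜 ≤ c * ‖T w‖) (w : N.domain) :
    ‖T w‖ ≤ ‖N w - x‖ + c := by
  have hsplit : ‖T w‖ ^ 2 = RCLike.re ⟪N w - x, (w : H)⟫_𝕜 + RCLike.re ⟪x, (w : H)⟫_𝕜 := by
    rw [hT, ← AddMonoidHom.map_add, ← inner_add_left, sub_add_cancel]
  have hdefect : RCLike.re ⟪N w - x, (w : H)⟫_𝕜 ≤ ‖N w - x‖ * ‖T w‖ :=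
    (re_inner_le_norm _ _).trans (mul_le_mul_of_nonneg_left (hle w) (norm_nonneg _))
  nlinarith [hx w, norm_nonneg (T w), norm_nonneg (N w - x)]

end LinearPMap

theorem stmt11_general
    {H : Type*} [NormedAddCommGroup H] [InnerProductSpace ℂ H] [CompleteSpace H]
    (A N Rhalf : H →ₗ.[ℂ] H) (Rneg : H →L[ℂ] H)
    (hAsym : ∀ v w : A.domain, ⟪A v, (w : H)⟫_ℂ = ⟪(v : H), A w⟫_ℂ)
    (hNsa : N.adjoint = N)
    (hgeone : ∀ v : N.domain, ‖(v : H)‖ ^ 2 ≤ (⟪N v, (v : H)⟫_ℂ).re)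
    (hNR : N.domain ≤ Rhalf.domain)
    (hsq_mem : ∀ v : N.domain, Rhalf ⟨(v : H), hNR v.prop⟩ ∈ Rhalf.domain)
    (hsq : ∀ v : N.domain,
      Rhalf ⟨Rhalf ⟨(v : H), hNR v.prop⟩, hsq_mem v⟩ = N v)
    (hnormsq : ∀ v : N.domain,
      (⟪N v, (v : H)⟫_ℂ).re = ‖Rhalf ⟨(v : H), hNR v.prop⟩‖ ^ 2)
    (hinv : ∀ v : Rhalf.domain, Rneg (Rhalf v) = (v : H))
    (hDA : N.domain ≤ A.domain)
    (hbound : ∀ v : N.domain,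
      ‖⟪A ⟨(v : H), hDA v.prop⟩, (v : H)⟫_ℂ‖ ≤ (⟪N v, (v : H)⟫_ℂ).re) :
    ∀ v : N.domain,
      ‖Rneg (A ⟨(v : H), hDA v.prop⟩)‖ ≤ ‖Rhalf ⟨(v : H), hNR v.prop⟩‖ := by
  intro v
  let S : N.domain →ₗ[ℂ] H := A.toFun ∘ₗ Submodule.inclusion hDA
  let T : N.domain →ₗ[ℂ] H := Rhalf.toFun ∘ₗ Submodule.inclusion hNR
  have hT : ∀ w, ‖T w‖ ^ 2 = (⟪N w, (w : H)⟫_ℂ).re := fun w => (hnormsq w).symm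
  have hle : ∀ w : N.domain, ‖(w : H)‖ ≤ ‖T w‖ := fun w =>
    le_of_sq_le_sq ((hgeone w).trans (hT w).ge) (norm_nonneg _)
  have hsymm : (((innerₛₗ ℂ).comp S).compl₂ N.domain.subtype).IsSymm := ⟨fun w w' => by
    change conj ⟪S w, (w' : H)⟫_ℂ = ⟪S w', (w : H)⟫_ℂ
    rw [inner_conj_symm]
    exact (hAsym (Submodule.inclusion hDA w') (Submodule.inclusion hDA w)).symm⟩
  have hST : ∀ w : N.domain, ‖⟪S v, (w : H)⟫_ℂ‖ ≤ ‖T v‖ * ‖T w‖ :=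
    hsymm.norm_apply_le (fun w => (hbound w).trans (hT w).ge) v
  have hdense := N.dense_range_of_adjoint_eq_self hNsa fun w hw => by
    simpa [hw] using hgeone w
  refine hdense.norm_apply_le Rneg.continuous ?_
  rintro _ ⟨w, rfl⟩
  have hRN : Rneg (N w) = T w := by rw [← hsq w]; exact hinv _
  change ‖Rneg (N w)‖ ≤ ‖N w - S v‖ + ‖T v‖
  rw [hRN]
  exact N.norm_le_norm_sub_add hT hle (norm_nonneg _)
    (fun w => (RCLike.re_le_norm _).trans (hST w)) w

/-- If `A` is densely defined symmetric, `N ≥ 1` self-adjoint with `D(N) ⊆ D(A)`, square root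
`Rhalf = N^{1/2}` and bounded inverse square root `Rneg = N^{-1/2}`, and
`|⟨Av, v⟩| ≤ ⟨Nv, v⟩` for all `v ∈ D(N)`, then `‖N^{-1/2}Av‖ ≤ ‖N^{1/2}v‖` for `v ∈ D(N)`,
i.e. `A` is bounded from `ℋ₁` to `ℋ₋₁` with norm at most `1`. -/
theorem stmt11
    {H : Type*} [NormedAddCommGroup H] [InnerProductSpace ℂ H] [CompleteSpace H]
    (A N Rhalf : H →ₗ.[ℂ] H) (Rneg : H →L[ℂ] H)
    (hAdense : Dense (A.domain : Set H))
    (hAsym : ∀ v w : A.domain, ⟪A v, (w : H)⟫_ℂ = ⟪(v : H), A w⟫_ℂ)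
    (hNdense : Dense (N.domain : Set H)) (hNsa : N.adjoint = N)
    (hgeone : ∀ v : N.domain, ‖(v : H)‖ ^ 2 ≤ (⟪N v, (v : H)⟫_ℂ).re)
    (hNR : N.domain ≤ Rhalf.domain)
    (hsq_mem : ∀ v : N.domain, Rhalf ⟨(v : H), hNR v.prop⟩ ∈ Rhalf.domain)
    (hsq : ∀ v : N.domain,
      Rhalf ⟨Rhalf ⟨(v : H), hNR v.prop⟩, hsq_mem v⟩ = N v)
    (hnormsq : ∀ v : N.domain,
      (⟪N v, (v : H)⟫_ℂ).re = ‖Rhalf ⟨(v : H), hNR v.prop⟩‖ ^ 2)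
    (hinv : ∀ v : Rhalf.domain, Rneg (Rhalf v) = (v : H))
    (hRnegnorm : ‖Rneg‖ ≤ 1)
    (hDA : N.domain ≤ A.domain)
    (hbound : ∀ v : N.domain,
      ‖⟪A ⟨(v : H), hDA v.prop⟩, (v : H)⟫_ℂ‖ ≤ (⟪N v, (v : H)⟫_ℂ).re) :
    ∀ v : N.domain,
      ‖Rneg (A ⟨(v : H), hDA v.prop⟩)‖ ≤ ‖Rhalf ⟨(v : H), hNR v.prop⟩‖ :=
  stmt11_general A N Rhalf Rneg hAsym hNsa hgeone hNR hsq_mem hsq hnormsq hinv hDA hbound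
end

section
/- Let (π, V) be a continuous representation of a Lie group G (with smooth exponential function) on an integral complete locally convex space V, and suppose the subspace V'_{C¹} of weak-* C¹-vectors of the dual representation separates the points of V. If v ∈ V is such that for every x in the Lie algebra 𝔤 the limit dπ(x)v := d/dt|_{t=0} π(exp tx)v exists, and the resulting map ω_v : 𝔤 → V, x ↦ dπ(x)v, is continuous, then ω_v is linear. -/
/-! For `α ∈ V'_{C¹}`, the composite `α ∘ ω` is the derivative at `1` of the `C¹` map
`a ↦ α (π a v)` along one-parameter subgroups, which is linear by the definition of `V'_{C¹}`.
Since these functionals separate the points of `V`, `ω` is linear itself. -/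

open Filter Topology

theorem ContinuousLinearMap.hasDerivAt_comp_of_tendsto_slope {𝕜 V F : Type*}
    [NontriviallyNormedField 𝕜] [AddCommGroup V] [Module 𝕜 V] [TopologicalSpace V]
    [NormedAddCommGroup F] [NormedSpace 𝕜 F] (α : V →L[𝕜] F) {γ : 𝕜 → V} {w : V} {t : 𝕜}
    (h : Tendsto (slope γ t) (𝓝[≠] t) (𝓝 w)) : HasDerivAt (α ∘ γ) (α w) t := by
  rw [hasDerivAt_iff_tendsto_slope]
  exact ((α.continuous.tendsto w).comp h).congr (α.toLinearMap.slope_comp γ t · |>.symm)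

theorem eq_of_forall_mem_apply_eq {V W F : Type*} [AddCommGroup V] [AddCommGroup W]
    [FunLike F V W] [AddMonoidHomClass F V W] {S : Set F}
    (hS : ∀ u : V, u ≠ 0 → ∃ α ∈ S, α u ≠ 0) {a b : V} (h : ∀ α ∈ S, α a = α b) : a = b := by
  by_contra hab
  obtain ⟨α, hα, hne⟩ := hS (a - b) (sub_ne_zero.mpr hab)
  exact hne (by rw [map_sub, h α hα, sub_self])

theorem isLinearMap_of_forall_mem_isLinearMap_comp {R M V W F : Type*} [Semiring R]
    [AddCommMonoid M] [Module R M] [AddCommGroup V] [Module R V] [AddCommGroup W] [Module R W]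
    [FunLike F V W] [LinearMapClass F R V W] {S : Set F}
    (hS : ∀ u : V, u ≠ 0 → ∃ α ∈ S, α u ≠ 0) {f : M → V}
    (hf : ∀ α ∈ S, IsLinearMap R (α ∘ f)) : IsLinearMap R f where
  map_add x y := eq_of_forall_mem_apply_eq hS fun α hα => by
    simpa only [map_add, Function.comp_apply] using (hf α hα).map_add x y
  map_smul c x := eq_of_forall_mem_apply_eq hS fun α hα => by
    simpa only [map_smul, Function.comp_apply] using (hf α hα).map_smul c x

theorem stmt13_general
    {G : Type*} [TopologicalSpace G] [Group G]
    {g : Type*} [AddCommGroup g] [Module ℝ g] [TopologicalSpace g]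
    {V : Type*} [AddCommGroup V] [Module ℝ V] [TopologicalSpace V]
    (exp : g → G)
    (hexp_zero : exp 0 = 1)
    (π : G → V →ₗ[ℝ] V)
    (hπ1 : π 1 = LinearMap.id)
    -- the weak-* `C¹` functionals for the dual representation
    (C1 : Set (V →L[ℝ] ℝ))
    (hC1 : C1 = {α : V →L[ℝ] ℝ | ∀ w : V, ∃ L : G → g → ℝ,
      (∀ a : G, IsLinearMap ℝ (L a)) ∧
      Continuous (fun p : G × g => L p.1 p.2) ∧
      ∀ (a : G) (x : g),
        HasDerivAt (fun t : ℝ => α (π (a * exp (t • x)) w)) (L a x) 0})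
    -- … separate the points of `V`
    (hsep : ∀ v : V, v ≠ 0 → ∃ α ∈ C1, α v ≠ 0)
    (v : V) (ω : g → V)
    (hω : ∀ x : g, Filter.Tendsto
      (fun t : ℝ => t⁻¹ • (π (exp (t • x)) v - v))
      (nhdsWithin 0 {(0:ℝ)}ᶜ) (nhds (ω x))) :
    IsLinearMap ℝ ω := by
  refine isLinearMap_of_forall_mem_isLinearMap_comp hsep fun α hα => ?_
  rw [hC1] at hα
  obtain ⟨L, hL, -, hderiv⟩ := hα v
  have hslope (x : g) :
      Tendsto (slope (fun t : ℝ => π (1 * exp (t • x)) v) 0) (𝓝[≠] 0) (𝓝 (ω x)) :=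
    (hω x).congr fun t => by simp [slope, hexp_zero, hπ1]
  have hαω : α ∘ ω = L 1 := funext fun x =>
    (α.hasDerivAt_comp_of_tendsto_slope (hslope x)).unique (hderiv 1 x)
  exact hαω ▸ hL 1

/-- Lemma 1.4(b) of the paper: let `π` be a continuous representation of a Lie group `G`
(with exponential function `exp : 𝔤 → G`) on an integral complete locally convex space `V`
whose weak-* `C¹` functionals separate points. If for `v ∈ V` all infinitesimal generators
`ω x = (d/dt)|₀ π(exp tx)v` exist and `ω : 𝔤 → V` is continuous, then `ω` is linear. -/
theorem stmt13
    {G : Type*} [TopologicalSpace G] [Group G] [IsTopologicalGroup G]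
    {g : Type*} [AddCommGroup g] [Module ℝ g] [TopologicalSpace g]
      [IsTopologicalAddGroup g] [ContinuousSMul ℝ g] [LocallyConvexSpace ℝ g]
    {V : Type*} [AddCommGroup V] [Module ℝ V] [TopologicalSpace V]
      [IsTopologicalAddGroup V] [ContinuousSMul ℝ V] [LocallyConvexSpace ℝ V]
    (exp : g → G)
    (hexp_add : ∀ (x : g) (s t : ℝ), exp ((s + t) • x) = exp (s • x) * exp (t • x))
    (hexp_zero : exp 0 = 1)
    (π : G → V →ₗ[ℝ] V)
    (hπ : ∀ a b : G, π (a * b) = (π a).comp (π b)) (hπ1 : π 1 = LinearMap.id)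
    (hactcont : Continuous fun p : G × V => π p.1 p.2)
    -- `V` is integral complete
    (hIC : ∀ f : ℝ → V, Continuous f → ∃ w : V,
      ∀ α : V →L[ℝ] ℝ, α w = ∫ t in (0:ℝ)..1, α (f t))
    -- the weak-* `C¹` functionals for the dual representation
    (C1 : Set (V →L[ℝ] ℝ))
    (hC1 : C1 = {α : V →L[ℝ] ℝ | ∀ w : V, ∃ L : G → g → ℝ,
      (∀ a : G, IsLinearMap ℝ (L a)) ∧
      Continuous (fun p : G × g => L p.1 p.2) ∧
      ∀ (a : G) (x : g),
        HasDerivAt (fun t : ℝ => α (π (a * exp (t • x)) w)) (L a x) 0})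
    -- … separate the points of `V`
    (hsep : ∀ v : V, v ≠ 0 → ∃ α ∈ C1, α v ≠ 0)
    (v : V) (ω : g → V)
    (hω : ∀ x : g, Filter.Tendsto
      (fun t : ℝ => t⁻¹ • (π (exp (t • x)) v - v))
      (nhdsWithin 0 {(0:ℝ)}ᶜ) (nhds (ω x)))
    (hωcont : Continuous ω) :
    IsLinearMap ℝ ω :=
  stmt13_general exp hexp_zero π hπ1 C1 hC1 hsep v ω hω
end
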